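/- arXiv:1704.04040 — 2 statements merged into one kernel-verified Lean document; each statement's English description precedes it below -/
import Mathlib

section
/- In the abrupt-change setting g(y,z) = ν₁(z) for y ≤ θ₀ and g(y,z) = ν₂(z) for y > θ₀ with 0 < θ₀ < 1, set V_ε = sup_{|z| ≥ ε} |ν₁(z) − ν₂(z)| and assume 0 < V_ε < ∞. Then for every θ with θ₀ < θ ≤ 1, the quantity 𝒟^(ε)(θ) := sup_{|z| ≥ ε} sup_{0 ≤ κ ≤ θ' ≤ θ} |D(κ,θ',z)| equals V_ε · θ₀ · (1 − θ₀/θ), and 𝒟^(ε)(θ) = 0 for θ ≤ θ₀. -/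
open MeasureTheory

/-- The measure of time variation `D(κ,θ,z)`. -/
noncomputable def Dtv (g : ℝ → ℝ → ℝ) (κ θ z : ℝ) : ℝ :=
  (∫ y in (0:ℝ)..κ, g y z) - κ / θ * ∫ y in (0:ℝ)..θ, g y z

/-!
For the step function `∫₀ᵗ g = t ν₂ + min(t, θ₀) (ν₁ − ν₂)`, so
`D(κ, θ', z) = w(κ, θ') (ν₁ z − ν₂ z)` with a nonnegative weight `w` that does not depend on `z`.
The set of values `|D|` is therefore the product of the set of weights with the set of values
`|ν₁ z − ν₂ z|`, and its supremum is `max w · V_ε`. The weight vanishes for `θ' ≤ θ₀`, and for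
`θ₀ < θ` its maximum over the triangle is `θ₀ (1 − θ₀/θ)`, attained at `(κ, θ') = (θ₀, θ)`.
-/

open Set
open scoped Pointwise

lemma csSup_mul_of_isGreatest {A S : Set ℝ} {c : ℝ} (hA : IsGreatest A c) (hc : 0 ≤ c)
    (hS : S.Nonempty) (hSbdd : BddAbove S) (hS0 : ∀ v ∈ S, 0 ≤ v) :
    sSup (A * S) = c * sSup S := by
  have hub : ∀ x ∈ A * S, x ≤ c * sSup S := by
    rintro _ ⟨a, ha, v, hv, rfl⟩
    calc a * v ≤ c * v := mul_le_mul_of_nonneg_right (hA.2 ha) (hS0 v hv)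
      _ ≤ c * sSup S := mul_le_mul_of_nonneg_left (le_csSup hSbdd hv) hc
  refine le_antisymm (csSup_le (hA.nonempty.mul hS) hub) ?_
  rw [← smul_eq_mul, ← Real.sSup_smul_of_nonneg hc]
  exact csSup_le_csSup ⟨_, hub⟩ hS.smul_set (smul_set_subset_mul hA.1)

lemma integral_ite_le_const {θ₀ t : ℝ} (a b : ℝ) (hθ₀ : 0 ≤ θ₀) (ht : 0 ≤ t) :
    ∫ y in (0:ℝ)..t, (if y ≤ θ₀ then a else b) = t * b + min t θ₀ * (a - b) := by
  set m := min t θ₀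
  have hm : 0 ≤ m := le_min ht hθ₀
  have hmt : m ≤ t := min_le_left t θ₀
  have h_left : EqOn (fun _ => a) (fun y => if y ≤ θ₀ then a else b) (Ioo 0 m) :=
    fun y hy => (if_pos (hy.2.le.trans (min_le_right t θ₀))).symm
  have h_right : EqOn (fun _ => b) (fun y => if y ≤ θ₀ then a else b) (Ioo m t) := by
    intro y hy
    have hθ₀y : θ₀ < y := (min_lt_iff.1 hy.1).resolve_left hy.2.not_gt
    exact (if_neg hθ₀y.not_ge).symm
  rw [← intervalIntegral.integral_add_adjacent_intervals (b := m)
      (intervalIntegrable_const.congr_uIoo (uIoo_of_le hm ▸ h_left))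
      (intervalIntegrable_const.congr_uIoo (uIoo_of_le hmt ▸ h_right)),
    ← intervalIntegral.integral_congr_Ioo_of_le hm h_left,
    ← intervalIntegral.integral_congr_Ioo_of_le hmt h_right,
    intervalIntegral.integral_const, intervalIntegral.integral_const, smul_eq_mul, smul_eq_mul]
  ring

noncomputable def abruptWeight (θ₀ κ θ : ℝ) : ℝ :=
  min κ θ₀ - κ / θ * min θ θ₀

def abruptWeights (θ₀ θ : ℝ) : Set ℝ :=
  {w | ∃ κ θ', 0 ≤ κ ∧ κ ≤ θ' ∧ θ' ≤ θ ∧ w = abruptWeight θ₀ κ θ'}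

section abruptWeight

variable {θ₀ κ θ θ' : ℝ}

lemma Dtv_ite_le_eq_abruptWeight_mul (ν₁ ν₂ : ℝ → ℝ) (hθ₀ : 0 ≤ θ₀) (hκ : 0 ≤ κ) (hκθ : κ ≤ θ)
    (z : ℝ) :
    Dtv (fun y w => if y ≤ θ₀ then ν₁ w else ν₂ w) κ θ z
      = abruptWeight θ₀ κ θ * (ν₁ z - ν₂ z) := by
  have hκθ_cancel : κ / θ * θ = κ :=
    div_mul_cancel_of_imp fun hθ => le_antisymm (hθ ▸ hκθ) hκ
  rw [Dtv, abruptWeight, integral_ite_le_const _ _ hθ₀ hκ,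
    integral_ite_le_const _ _ hθ₀ (hκ.trans hκθ)]
  linear_combination (-ν₂ z) * hκθ_cancel

lemma abruptWeight_nonneg (hθ₀ : 0 ≤ θ₀) (hκ : 0 ≤ κ) (hκθ : κ ≤ θ) :
    0 ≤ abruptWeight θ₀ κ θ := by
  rcases hκ.eq_or_lt with rfl | hκ
  · simp [abruptWeight, hθ₀]
  have hθ : 0 < θ := hκ.trans_le hκθ
  rw [abruptWeight, sub_nonneg, div_mul_eq_mul_div, div_le_iff₀ hθ, min_mul_of_nonneg _ _ hθ.le]
  exact le_min (mul_le_mul_of_nonneg_left (min_le_left _ _) hκ.le)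
    ((mul_le_mul hκθ (min_le_right _ _) (le_min hθ.le hθ₀) hθ.le).trans_eq (mul_comm _ _))

lemma abruptWeights_nonneg (hθ₀ : 0 ≤ θ₀) : ∀ w ∈ abruptWeights θ₀ θ, 0 ≤ w := by
  rintro _ ⟨κ, θ', hκ, hκθ', -, rfl⟩
  exact abruptWeight_nonneg hθ₀ hκ hκθ'

lemma abruptWeight_eq_zero (hκ : 0 ≤ κ) (hκθ : κ ≤ θ) (hθθ₀ : θ ≤ θ₀) :
    abruptWeight θ₀ κ θ = 0 := by
  rw [abruptWeight, min_eq_left (hκθ.trans hθθ₀), min_eq_left hθθ₀,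
    div_mul_cancel_of_imp fun hθ => le_antisymm (hθ ▸ hκθ) hκ, sub_self]

lemma abruptWeight_le (hθ₀ : 0 ≤ θ₀) (hθ₀θ : θ₀ < θ) (hκ : 0 ≤ κ) (hκθ' : κ ≤ θ')
    (hθ' : θ' ≤ θ) : abruptWeight θ₀ κ θ' ≤ θ₀ * (1 - θ₀ / θ) := by
  rcases le_or_gt θ' θ₀ with hθ'θ₀ | hθ₀θ'
  · rw [abruptWeight_eq_zero hκ hκθ' hθ'θ₀]
    exact mul_nonneg hθ₀ (sub_nonneg.2 (div_le_one_of_le₀ hθ₀θ.le (hθ₀.trans hθ₀θ.le)))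
  have hθ'pos : 0 < θ' := hθ₀.trans_lt hθ₀θ'
  calc abruptWeight θ₀ κ θ' = min κ θ₀ - κ / θ' * θ₀ := by
        rw [abruptWeight, min_eq_right hθ₀θ'.le]
    _ ≤ min κ θ₀ - min κ θ₀ / θ' * θ₀ := by gcongr; exact min_le_left _ _
    _ = min κ θ₀ * (1 - θ₀ / θ') := by ring
    _ ≤ θ₀ * (1 - θ₀ / θ') :=
        mul_le_mul_of_nonneg_right (min_le_right _ _)
          (sub_nonneg.2 (div_le_one_of_le₀ hθ₀θ'.le hθ'pos.le))
    _ ≤ θ₀ * (1 - θ₀ / θ) := by gcongr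

lemma abruptWeight_self_left (hθ : θ₀ ≤ θ) : abruptWeight θ₀ θ₀ θ = θ₀ * (1 - θ₀ / θ) := by
  rw [abruptWeight, min_self, min_eq_right hθ]
  ring

lemma isGreatest_abruptWeights (hθ₀ : 0 ≤ θ₀) (hθ : θ₀ < θ) :
    IsGreatest (abruptWeights θ₀ θ) (θ₀ * (1 - θ₀ / θ)) :=
  ⟨⟨θ₀, θ, hθ₀, hθ.le, le_rfl, (abruptWeight_self_left hθ.le).symm⟩,
    by rintro _ ⟨κ, θ', hκ, hκθ', hθ', rfl⟩; exact abruptWeight_le hθ₀ hθ hκ hκθ' hθ'⟩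

lemma isGreatest_abruptWeights_of_le (hθ : 0 ≤ θ) (hθθ₀ : θ ≤ θ₀) :
    IsGreatest (abruptWeights θ₀ θ) 0 :=
  ⟨⟨0, 0, le_rfl, le_rfl, hθ, (abruptWeight_eq_zero le_rfl le_rfl (hθ.trans hθθ₀)).symm⟩,
    by rintro _ ⟨κ, θ', hκ, hκθ', hθ', rfl⟩
       exact (abruptWeight_eq_zero hκ hκθ' (hθ'.trans hθθ₀)).le⟩

lemma setOf_abs_Dtv_ite_le_eq_mul (ν₁ ν₂ : ℝ → ℝ) (P : ℝ → Prop) (hθ₀ : 0 ≤ θ₀) :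
    {x | ∃ z κ θ', P z ∧ 0 ≤ κ ∧ κ ≤ θ' ∧ θ' ≤ θ ∧
        x = |Dtv (fun y w => if y ≤ θ₀ then ν₁ w else ν₂ w) κ θ' z|}
      = abruptWeights θ₀ θ * {v | ∃ z, P z ∧ v = |ν₁ z - ν₂ z|} := by
  have habs : ∀ z κ θ', 0 ≤ κ → κ ≤ θ' →
      |Dtv (fun y w => if y ≤ θ₀ then ν₁ w else ν₂ w) κ θ' z|
        = abruptWeight θ₀ κ θ' * |ν₁ z - ν₂ z| := fun z κ θ' hκ hκθ' => by
    rw [Dtv_ite_le_eq_abruptWeight_mul ν₁ ν₂ hθ₀ hκ hκθ', abs_mul,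
      abs_of_nonneg (abruptWeight_nonneg hθ₀ hκ hκθ')]
  ext x
  constructor
  · rintro ⟨z, κ, θ', hz, hκ, hκθ', hθ', rfl⟩
    rw [habs z κ θ' hκ hκθ']
    exact mul_mem_mul ⟨κ, θ', hκ, hκθ', hθ', rfl⟩ ⟨z, hz, rfl⟩
  · rintro ⟨_, ⟨κ, θ', hκ, hκθ', hθ', rfl⟩, _, ⟨z, hz, rfl⟩, rfl⟩
    exact ⟨z, κ, θ', hz, hκ, hκθ', hθ', (habs z κ θ' hκ hκθ').symm⟩

end abruptWeight

theorem stmt_3_general (ν₁ ν₂ : ℝ → ℝ) (θ₀ ε : ℝ) (h0 : 0 < θ₀)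
    (M : ℝ) (hM : ∀ z : ℝ, ε ≤ |z| → |ν₁ z| ≤ M ∧ |ν₂ z| ≤ M) :
    (∀ θ : ℝ, θ₀ < θ → θ ≤ 1 →
      sSup {x : ℝ | ∃ z κ θ' : ℝ, ε ≤ |z| ∧ 0 ≤ κ ∧ κ ≤ θ' ∧ θ' ≤ θ ∧
          x = |Dtv (fun y w => if y ≤ θ₀ then ν₁ w else ν₂ w) κ θ' z|}
        = (sSup {v : ℝ | ∃ z : ℝ, ε ≤ |z| ∧ v = |ν₁ z - ν₂ z|}) * θ₀ * (1 - θ₀ / θ)) ∧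
    (∀ θ : ℝ, 0 ≤ θ → θ ≤ θ₀ →
      sSup {x : ℝ | ∃ z κ θ' : ℝ, ε ≤ |z| ∧ 0 ≤ κ ∧ κ ≤ θ' ∧ θ' ≤ θ ∧
          x = |Dtv (fun y w => if y ≤ θ₀ then ν₁ w else ν₂ w) κ θ' z|} = 0) := by
  set S := {v : ℝ | ∃ z : ℝ, ε ≤ |z| ∧ v = |ν₁ z - ν₂ z|}
  have hS : S.Nonempty := ⟨_, |ε|, (abs_abs ε).symm ▸ le_abs_self ε, rfl⟩
  have hSbdd : BddAbove S := by
    refine ⟨M + M, ?_⟩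
    rintro _ ⟨z, hz, rfl⟩
    exact (abs_sub _ _).trans (add_le_add (hM z hz).1 (hM z hz).2)
  have hS0 : ∀ v ∈ S, 0 ≤ v := by
    rintro _ ⟨z, -, rfl⟩
    exact abs_nonneg _
  refine ⟨fun θ hθ _ => ?_, fun θ hθ hθθ₀ => ?_⟩
  · have hA := isGreatest_abruptWeights h0.le hθ
    rw [setOf_abs_Dtv_ite_le_eq_mul ν₁ ν₂ _ h0.le,
      csSup_mul_of_isGreatest hA (abruptWeights_nonneg h0.le _ hA.1) hS hSbdd hS0]
    ring
  · rw [setOf_abs_Dtv_ite_le_eq_mul ν₁ ν₂ _ h0.le,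
      csSup_mul_of_isGreatest (isGreatest_abruptWeights_of_le hθ hθθ₀) le_rfl hS hSbdd hS0,
      zero_mul]

/-- In the abrupt-change setting, `𝒟^(ε)(θ) = V_ε θ₀ (1 - θ₀/θ)` for `θ > θ₀` and
`𝒟^(ε)(θ) = 0` for `θ ≤ θ₀`. -/
theorem stmt_3 (ν₁ ν₂ : ℝ → ℝ) (θ₀ ε : ℝ) (h0 : 0 < θ₀) (h1 : θ₀ < 1) (hε : 0 < ε)
    (M : ℝ) (hM : ∀ z : ℝ, ε ≤ |z| → |ν₁ z| ≤ M ∧ |ν₂ z| ≤ M)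
    (hV : 0 < sSup {v : ℝ | ∃ z : ℝ, ε ≤ |z| ∧ v = |ν₁ z - ν₂ z|}) :
    (∀ θ : ℝ, θ₀ < θ → θ ≤ 1 →
      sSup {x : ℝ | ∃ z κ θ' : ℝ, ε ≤ |z| ∧ 0 ≤ κ ∧ κ ≤ θ' ∧ θ' ≤ θ ∧
          x = |Dtv (fun y w => if y ≤ θ₀ then ν₁ w else ν₂ w) κ θ' z|}
        = (sSup {v : ℝ | ∃ z : ℝ, ε ≤ |z| ∧ v = |ν₁ z - ν₂ z|}) * θ₀ * (1 - θ₀ / θ)) ∧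
    (∀ θ : ℝ, 0 ≤ θ → θ ≤ θ₀ →
      sSup {x : ℝ | ∃ z κ θ' : ℝ, ε ≤ |z| ∧ 0 ≤ κ ∧ κ ≤ θ' ∧ θ' ≤ θ ∧
          x = |Dtv (fun y w => if y ≤ θ₀ then ν₁ w else ν₂ w) κ θ' z|} = 0) :=
  stmt_3_general ν₁ ν₂ θ₀ ε h0 M hM
end

section
/- Let 0 < θ₀ < 1, k ≥ 1, and for θ ∈ (θ₀, 1) let κ₀(θ) = θ₀ + (θ − θ₀)^{1+1/k} / (θ(k+1))^{1/k} and h_k(κ) = θ(κ−θ₀)^{k+1} − κ(θ−θ₀)^{k+1}. Then (1/θ)·|h_k(κ₀(θ))| = (θ₀/θ)(θ−θ₀)^{k+1} + O((θ−θ₀)^{k+2+1/k}) as θ ↓ θ₀; in particular there exist λ > 0 and a constant K such that | (1/θ) sup_{κ ∈ (θ₀,θ]} |h_k(κ)| − (θ−θ₀)^{k+1} | ≤ K (θ−θ₀)^{k+2} for all θ ∈ (θ₀, θ₀+λ]. -/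
/-!
Write `δ = θ - θ₀` and `s = κ - θ₀`. On `(θ₀, θ]` we have `|h_k(κ)| = θ₀ δ^{k+1} + s δ^{k+1} - θ s^{k+1}`,
a concave function of `s` whose maximum sits at the critical point `t = κ₀(θ) - θ₀`, characterised by
`θ (k+1) t^k = δ^{k+1}`. There its value is `θ₀ δ^{k+1} + k/(k+1) · t δ^{k+1}`, and both expansions
follow from `t ≤ δ` and `t δ^{k+1} = δ^{k+2+1/k} / (θ(k+1))^{1/k}`.
-/

theorem pow_succ_add_mul_sub_le_pow_succ {a b : ℝ} (ha : 0 < a) (hb : 0 ≤ b) (n : ℕ) :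
    a ^ (n + 1) + (n + 1) * a ^ n * (b - a) ≤ b ^ (n + 1) := by
  have hx : -2 ≤ (b - a) / a := by rw [le_div_iff₀ ha]; linarith
  have key := mul_le_mul_of_nonneg_left (one_add_mul_le_pow hx (n + 1)) (pow_nonneg ha.le (n + 1))
  rw [← mul_pow, mul_add a, mul_div_cancel₀ _ ha.ne', mul_one, add_sub_cancel] at key
  refine le_of_eq_of_le ?_ key
  field_simp
  push_cast
  ring

/-- By concavity, the critical point `t` of `s ↦ s * D - c * s ^ (n + 1)` maximises it on `[0, ∞)`. -/
theorem mul_sub_mul_pow_le_of_critical {c D s t : ℝ} {n : ℕ} (hc : 0 ≤ c) (ht : 0 < t) (hs : 0 ≤ s)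
    (hcrit : c * ((n + 1) * t ^ n) = D) :
    s * D - c * s ^ (n + 1) ≤ t * D - c * t ^ (n + 1) := by
  subst hcrit
  linear_combination mul_le_mul_of_nonneg_left (pow_succ_add_mul_sub_le_pow_succ ht hs n) hc

theorem rpow_one_add_inv_div_rpow_inv_pow {δ A : ℝ} {k : ℕ} (hδ : 0 < δ) (hA : 0 < A) (hk : k ≠ 0) :
    (δ ^ ((1 : ℝ) + 1 / k) / A ^ ((1 : ℝ) / k)) ^ k = δ ^ (k + 1) / A := by
  have hk' : (k : ℝ) ≠ 0 := Nat.cast_ne_zero.2 hk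
  rw [div_pow, ← Real.rpow_mul_natCast hδ.le, ← Real.rpow_mul_natCast hA.le,
    one_div_mul_cancel hk', Real.rpow_one, add_mul, one_div_mul_cancel hk', one_mul,
    ← Nat.cast_add_one, Real.rpow_natCast]

/-- The function `h_k` of the paper. -/
def hFun (θ₀ θ : ℝ) (k : ℕ) (κ : ℝ) : ℝ := θ * (κ - θ₀) ^ (k + 1) - κ * (θ - θ₀) ^ (k + 1)

section Critical

variable {θ₀ θ κ t : ℝ} {k : ℕ}

theorem hFun_nonpos (h0 : 0 ≤ θ₀) (hκ : θ₀ ≤ κ) (hκθ : κ ≤ θ) : hFun θ₀ θ k κ ≤ 0 := by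
  have hs : 0 ≤ κ - θ₀ := sub_nonneg.2 hκ
  have hsδ : κ - θ₀ ≤ θ - θ₀ := by linarith
  have hpow : (κ - θ₀) ^ k ≤ (θ - θ₀) ^ k := pow_le_pow_left₀ hs hsδ k
  have hlin : θ * (κ - θ₀) ^ (k + 1) ≤ θ * (κ - θ₀) * (θ - θ₀) ^ k := by
    rw [pow_succ', ← mul_assoc]
    exact mul_le_mul_of_nonneg_left hpow (by nlinarith)
  have hrest : 0 ≤ θ₀ * (θ - θ₀) ^ k * (θ - κ) :=
    mul_nonneg (mul_nonneg h0 (pow_nonneg (hs.trans hsδ) k)) (by linarith)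
  unfold hFun
  linear_combination hlin + hrest

variable (hcrit : θ * ((k + 1) * t ^ k) = (θ - θ₀) ^ (k + 1))
include hcrit

theorem abs_hFun_of_critical (h0 : 0 ≤ θ₀) (hθ : θ₀ ≤ θ) (ht : 0 ≤ t) :
    |hFun θ₀ θ k (θ₀ + t)| = θ₀ * (θ - θ₀) ^ (k + 1) + k / (k + 1) * (t * (θ - θ₀) ^ (k + 1)) := by
  have hδ : 0 ≤ θ - θ₀ := sub_nonneg.2 hθ
  have hvalue : hFun θ₀ θ k (θ₀ + t)
      = -(θ₀ * (θ - θ₀) ^ (k + 1) + k / (k + 1) * (t * (θ - θ₀) ^ (k + 1))) := by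
    unfold hFun
    rw [← hcrit]
    field_simp
    ring
  rw [hvalue, abs_neg, abs_of_nonneg (by positivity)]

theorem le_sub_of_critical (h0 : 0 ≤ θ₀) (hθ : θ₀ < θ) (ht : 0 < t) (hk : k ≠ 0) :
    t ≤ θ - θ₀ := by
  have hδ : 0 < θ - θ₀ := sub_pos.2 hθ
  have hA : 0 < θ * (k + 1) := mul_pos (h0.trans_lt hθ) k.cast_add_one_pos
  rw [← pow_le_pow_iff_left₀ ht.le hδ.le hk]
  refine le_of_mul_le_mul_left ?_ hA
  calc θ * (k + 1) * t ^ k = (θ - θ₀) * (θ - θ₀) ^ k := by linear_combination hcrit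
    _ ≤ θ * (k + 1) * (θ - θ₀) ^ k :=
      mul_le_mul_of_nonneg_right (by nlinarith [k.cast_nonneg (α := ℝ)]) (pow_nonneg hδ.le k)

theorem isGreatest_abs_hFun_of_critical (h0 : 0 ≤ θ₀) (hθ : θ₀ < θ) (ht : 0 < t) (hk : k ≠ 0) :
    IsGreatest ((fun κ => |hFun θ₀ θ k κ|) '' Set.Ioc θ₀ θ) |hFun θ₀ θ k (θ₀ + t)| := by
  have htδ := le_sub_of_critical hcrit h0 hθ ht hk
  refine ⟨⟨θ₀ + t, ⟨by linarith, by linarith⟩, rfl⟩, ?_⟩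
  rintro _ ⟨κ, ⟨hκ, hκθ⟩, rfl⟩
  dsimp only
  rw [abs_of_nonpos (hFun_nonpos h0 hκ.le hκθ),
    abs_of_nonpos (hFun_nonpos h0 (by linarith) (by linarith))]
  have := mul_sub_mul_pow_le_of_critical (h0.trans hθ.le) ht (sub_nonneg.2 hκ.le) hcrit
  unfold hFun
  linear_combination this

theorem abs_inv_mul_abs_hFun_sub_le (h0 : 0 < θ₀) (hθ : θ₀ < θ) (ht : 0 < t) :
    |1 / θ * |hFun θ₀ θ k (θ₀ + t)| - θ₀ / θ * (θ - θ₀) ^ (k + 1)|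
      ≤ 1 / θ₀ * (t * (θ - θ₀) ^ (k + 1)) := by
  have hθpos : 0 < θ := h0.trans hθ
  have hX : 0 ≤ t * (θ - θ₀) ^ (k + 1) := by have := sub_pos.2 hθ; positivity
  have hc : (k : ℝ) / (k + 1) ≤ 1 := (div_le_one k.cast_add_one_pos).2 (by linarith)
  rw [abs_hFun_of_critical hcrit h0.le hθ.le ht.le,
    show 1 / θ * (θ₀ * (θ - θ₀) ^ (k + 1) + k / (k + 1) * (t * (θ - θ₀) ^ (k + 1)))
        - θ₀ / θ * (θ - θ₀) ^ (k + 1) = 1 / θ * (k / (k + 1) * (t * (θ - θ₀) ^ (k + 1))) by ring,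
    abs_of_nonneg (by positivity)]
  exact mul_le_mul (one_div_le_one_div_of_le h0 hθ.le) (mul_le_of_le_one_left hX hc)
    (by positivity) (by positivity)

theorem abs_inv_mul_sSup_abs_hFun_sub_le (h0 : 0 < θ₀) (hθ : θ₀ < θ) (ht : 0 < t) (hk : k ≠ 0) :
    |1 / θ * sSup ((fun κ => |hFun θ₀ θ k κ|) '' Set.Ioc θ₀ θ) - (θ - θ₀) ^ (k + 1)|
      ≤ 1 / θ₀ * (θ - θ₀) ^ (k + 2) := by
  have hθpos : 0 < θ := h0.trans hθ
  have hδ : 0 < θ - θ₀ := sub_pos.2 hθ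
  have htδ := le_sub_of_critical hcrit h0.le hθ ht hk
  have hX : t * (θ - θ₀) ^ (k + 1) ≤ (θ - θ₀) ^ (k + 2) := by
    rw [pow_succ' _ (k + 1)]; gcongr
  have hc : (k : ℝ) / (k + 1) ≤ 1 := (div_le_one k.cast_add_one_pos).2 (by linarith)
  have hcX : k / (k + 1) * (t * (θ - θ₀) ^ (k + 1)) ≤ t * (θ - θ₀) ^ (k + 1) :=
    mul_le_of_le_one_left (by positivity) hc
  rw [(isGreatest_abs_hFun_of_critical hcrit h0.le hθ ht hk).csSup_eq,
    abs_hFun_of_critical hcrit h0.le hθ.le ht.le,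
    show 1 / θ * (θ₀ * (θ - θ₀) ^ (k + 1) + k / (k + 1) * (t * (θ - θ₀) ^ (k + 1)))
        - (θ - θ₀) ^ (k + 1)
        = 1 / θ * (k / (k + 1) * (t * (θ - θ₀) ^ (k + 1)) - (θ - θ₀) ^ (k + 2)) by
      field_simp; ring,
    abs_mul, abs_of_pos (by positivity)]
  gcongr
  exact abs_sub_le_of_nonneg_of_le (by positivity) (hcX.trans hX) (by positivity) le_rfl

end Critical

theorem stmt_18_general (θ₀ : ℝ) (k : ℕ) (h0 : 0 < θ₀) (hk : 1 ≤ k) :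
    ∃ lam Kc : ℝ, 0 < lam ∧
      ∀ θ : ℝ, θ₀ < θ → θ ≤ θ₀ + lam → θ < 1 →
        (|1 / θ *
            |θ * ((θ₀ + (θ - θ₀) ^ ((1:ℝ) + 1 / k) / (θ * ((k:ℝ) + 1)) ^ ((1:ℝ) / k)) - θ₀) ^ (k + 1)
              - (θ₀ + (θ - θ₀) ^ ((1:ℝ) + 1 / k) / (θ * ((k:ℝ) + 1)) ^ ((1:ℝ) / k)) * (θ - θ₀) ^ (k + 1)|
            - θ₀ / θ * (θ - θ₀) ^ (k + 1)|
          ≤ Kc * (θ - θ₀) ^ ((k : ℝ) + 2 + 1 / k)) ∧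
        |1 / θ *
            sSup ((fun κ => |θ * (κ - θ₀) ^ (k + 1) - κ * (θ - θ₀) ^ (k + 1)|) '' Set.Ioc θ₀ θ)
            - (θ - θ₀) ^ (k + 1)|
          ≤ Kc * (θ - θ₀) ^ (k + 2) := by
  have hk0 : k ≠ 0 := Nat.one_le_iff_ne_zero.1 hk
  refine ⟨1, 1 / θ₀ * max 1 (θ₀ ^ ((1 : ℝ) / k))⁻¹, one_pos, fun θ hθ _ _ => ?_⟩
  have hθpos : 0 < θ := h0.trans hθ
  have hδ : 0 < θ - θ₀ := sub_pos.2 hθ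
  have hA : 0 < θ * ((k : ℝ) + 1) := by positivity
  set t := (θ - θ₀) ^ ((1:ℝ) + 1 / k) / (θ * ((k:ℝ) + 1)) ^ ((1:ℝ) / k) with ht_def
  have ht : 0 < t := by positivity
  have hcrit : θ * ((k + 1) * t ^ k) = (θ - θ₀) ^ (k + 1) := by
    rw [ht_def, rpow_one_add_inv_div_rpow_inv_pow hδ hA hk0]
    field_simp
  have htX : t * (θ - θ₀) ^ (k + 1) ≤ (θ₀ ^ ((1 : ℝ) / k))⁻¹ * (θ - θ₀) ^ ((k : ℝ) + 2 + 1 / k) := by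
    have hθ₀A : θ₀ ≤ θ * ((k : ℝ) + 1) := by nlinarith [k.cast_nonneg (α := ℝ)]
    rw [ht_def, div_mul_eq_mul_div, ← Real.rpow_natCast (θ - θ₀) (k + 1), ← Real.rpow_add hδ,
      div_eq_inv_mul, show (1 : ℝ) + 1 / k + ((k + 1 : ℕ) : ℝ) = k + 2 + 1 / k by push_cast; ring]
    gcongr
  constructor
  · calc _ ≤ 1 / θ₀ * (t * (θ - θ₀) ^ (k + 1)) := abs_inv_mul_abs_hFun_sub_le hcrit h0 hθ ht
      _ ≤ 1 / θ₀ * ((θ₀ ^ ((1 : ℝ) / k))⁻¹ * (θ - θ₀) ^ ((k : ℝ) + 2 + 1 / k)) := by gcongr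
      _ ≤ _ := by rw [← mul_assoc]; gcongr; exact le_max_right _ _
  · calc _ ≤ 1 / θ₀ * (θ - θ₀) ^ (k + 2) := abs_inv_mul_sSup_abs_hFun_sub_le hcrit h0 hθ ht hk0
      _ ≤ _ := by gcongr; exact le_mul_of_one_le_right (by positivity) (le_max_left _ _)

/-- Asymptotic expansion near the gradual change point:
`(1/θ)|h_k(κ₀(θ))| = (θ₀/θ)(θ-θ₀)^{k+1} + O((θ-θ₀)^{k+2+1/k})`, and
`(1/θ) sup_{κ ∈ (θ₀,θ]} |h_k(κ)| = (θ-θ₀)^{k+1} + O((θ-θ₀)^{k+2})` as `θ ↓ θ₀`. -/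
theorem stmt_18 (θ₀ : ℝ) (k : ℕ) (h0 : 0 < θ₀) (h1 : θ₀ < 1) (hk : 1 ≤ k) :
    ∃ lam Kc : ℝ, 0 < lam ∧
      ∀ θ : ℝ, θ₀ < θ → θ ≤ θ₀ + lam → θ < 1 →
        (|1 / θ *
            |θ * ((θ₀ + (θ - θ₀) ^ ((1:ℝ) + 1 / k) / (θ * ((k:ℝ) + 1)) ^ ((1:ℝ) / k)) - θ₀) ^ (k + 1)
              - (θ₀ + (θ - θ₀) ^ ((1:ℝ) + 1 / k) / (θ * ((k:ℝ) + 1)) ^ ((1:ℝ) / k)) * (θ - θ₀) ^ (k + 1)|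
            - θ₀ / θ * (θ - θ₀) ^ (k + 1)|
          ≤ Kc * (θ - θ₀) ^ ((k : ℝ) + 2 + 1 / k)) ∧
        |1 / θ *
            sSup ((fun κ => |θ * (κ - θ₀) ^ (k + 1) - κ * (θ - θ₀) ^ (k + 1)|) '' Set.Ioc θ₀ θ)
            - (θ - θ₀) ^ (k + 1)|
          ≤ Kc * (θ - θ₀) ^ (k + 2) :=
  stmt_18_general θ₀ k h0 hk
end
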